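/- Let λ > -1/2 and μ > 0. With C̃_{2n+1}^{(λ,μ)}(t) = ã_{2n+1}^{(λ,μ)} t P_n^{(λ-1/2, μ+1/2)}(2t² - 1), one has max_{t ∈ [-1,1]} |C̃_{2n+1}^{(λ,μ)}(t)| ≥ ã_{2n+1}^{(λ,μ)} sin(1/(2n)) |P_n^{(μ+1/2, λ-1/2)}(cos(1/n))| ≳ n^μ as n → ∞. -/

import Mathlib

open Real Set

/-- Jacobi polynomial `P_n^{(a,b)}` in the standard normalization. -/
noncomputable def jacobiP (a b : ℝ) (n : ℕ) (x : ℝ) : ℝ :=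
  (Nat.factorial n : ℝ)⁻¹ *
    ∑ k ∈ Finset.range (n + 1),
      (Nat.choose n k : ℝ) * (ascPochhammer ℝ k).eval ((n : ℝ) + a + b + 1) *
        (ascPochhammer ℝ (n - k)).eval (a + (k : ℝ) + 1) * ((x - 1) / 2) ^ k

/-- Pochhammer symbol `(q)_n` for real `q`. -/
noncomputable def poch (q : ℝ) (n : ℕ) : ℝ := (ascPochhammer ℝ n).eval q

/-- Normalization constant for odd orthonormal generalized Gegenbauer polynomials. -/
noncomputable def atilde2n1 (l m : ℝ) (n : ℕ) : ℝ :=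
  (((2 * n + l + m + 1) * Real.Gamma (n + 1) * Real.Gamma (n + l + m + 1)) /
    (Real.Gamma (n + l + 1 / 2) * Real.Gamma (n + m + 3 / 2))) ^ ((1 : ℝ) / 2)

/-!
At `t = sin (1 / (2n))` one has `2t² - 1 = -cos (1 / n)`, so the reflection
`P_n^{(α,β)}(-x) = (-1)^n P_n^{(β,α)}(x)` (a consequence of the Chu–Vandermonde identity) turns
the value of `|C̃_{2n+1}|` at `t` into the middle expression, which is therefore below the maximum.

For the growth, `ã_{2n+1} ~ √(2n)` because `Γ(n + 1 + s) ~ n! n^s`, and `sin (1 / (2n)) ≥ 1 / (πn)`.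
At `x = cos (1 / n)` we have `|x - 1| ≤ 1 / (2n²)`, and there the explicit sum for `P_n^{(a,b)}(x)`
is dominated by its constant term `(a + 1)_n / n! ≍ n^a`: the `k`-th term is at most
`(3/4)^k / (k!)²` times it, and these ratios add up to at most `12/13`. With `a = μ + 1/2`
the three factors multiply to `n^{1/2} · n^{-1} · n^{μ + 1/2} = n^μ`.
-/

open Finset Filter Topology
open scoped Nat

lemma poch_succ (x : ℝ) (n : ℕ) : poch x (n + 1) = poch x n * (x + n) :=
  ascPochhammer_succ_eval n x

lemma poch_eq_prod_range (x : ℝ) (n : ℕ) : poch x n = ∏ j ∈ range n, (x + j) := by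
  induction n with
  | zero => simp [poch]
  | succ n ih => rw [poch_succ, ih, prod_range_succ]

lemma poch_mul_poch_add (x : ℝ) (m n : ℕ) : poch x m * poch (x + m) n = poch x (m + n) := by
  simpa [poch, Polynomial.eval_comp] using congrArg (Polynomial.eval x) (ascPochhammer_mul ℝ m n)

lemma poch_neg (x : ℝ) (n : ℕ) : poch (-x) n = (-1) ^ n * poch (x - n + 1) n := by
  rw [poch, ascPochhammer_eval_neg_eq_descPochhammer, descPochhammer_eval_eq_ascPochhammer, poch]

lemma factorial_le_poch {a : ℝ} (ha : 0 ≤ a) (k : ℕ) : (k ! : ℝ) ≤ poch (a + 1) k := by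
  rw [poch_eq_prod_range, ← prod_range_add_one_eq_factorial, Nat.cast_prod]
  refine prod_le_prod (fun j _ => by positivity) fun j _ => ?_
  push_cast; linarith

lemma poch_le_pow {x : ℝ} (hx : 0 ≤ x) {k N : ℕ} (hk : k ≤ N) : poch x k ≤ (x + N) ^ k := by
  rw [poch_eq_prod_range, pow_eq_prod_const]
  refine prod_le_prod (fun j _ => by positivity) fun j hj => ?_
  have : (j : ℝ) ≤ N := by exact_mod_cast (mem_range.1 hj).le.trans hk
  linarith

lemma poch_nonneg {x : ℝ} (hx : 0 ≤ x) (n : ℕ) : 0 ≤ poch x n := by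
  rw [poch_eq_prod_range]; exact prod_nonneg fun j _ => add_nonneg hx j.cast_nonneg

/-- A form of the Chu–Vandermonde identity. -/
lemma sum_neg_one_pow_mul_choose_mul_poch (A D : ℝ) (M : ℕ) :
    ∑ i ∈ range (M + 1), (-1) ^ i * (M.choose i : ℝ) * poch D i * poch (A + i) (M - i) =
      poch (A - D) M := by
  have hdesc (r : ℝ) (k : ℕ) : (descPochhammer ℤ k).smeval r = poch (r - k + 1) k := by
    rw [Polynomial.descPochhammer_smeval_eq_ascPochhammer,
      Polynomial.ascPochhammer_smeval_eq_eval, poch]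
  have h := Ring.descPochhammer_smeval_add (r := -D) (s := A + M - 1) M (Commute.all _ _)
  rw [hdesc, Nat.sum_antidiagonal_eq_sum_range_succ (fun i j => (M.choose i : ℝ) *
    ((descPochhammer ℤ i).smeval (-D) * (descPochhammer ℤ j).smeval (A + M - 1)))] at h
  rw [show A - D = -D + (A + M - 1) - M + 1 by ring, h]
  refine sum_congr rfl fun i hi => ?_
  have hiM : i ≤ M := Nat.lt_succ_iff.1 (mem_range.1 hi)
  rw [hdesc, hdesc, Nat.cast_sub hiM, show -D - i + 1 = -(D + i - 1) by ring]
  rw [poch_neg, show D + i - 1 - i + 1 = D by ring, show A + M - 1 - (M - i) + 1 = A + i by ring]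
  ring

lemma Real.Gamma_add_nat_eq_mul_poch {x : ℝ} (hx : 0 < x) (n : ℕ) :
    Gamma (x + n) = Gamma x * poch x n := by
  induction n with
  | zero => simp [poch]
  | succ n ih =>
    rw [Nat.cast_succ, ← add_assoc, Gamma_add_one (by positivity), ih, poch_succ]
    ring

lemma tendsto_Gamma_nat_add_one_add_div_of_pos {s : ℝ} (hs : 0 < s) :
    Tendsto (fun n : ℕ => Gamma (n + 1 + s) / (n ! * (n : ℝ) ^ s)) atTop (𝓝 1) := by
  have hΓ : Gamma s ≠ 0 := (Gamma_pos_of_pos hs).ne'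
  convert (tendsto_const_nhds (x := Gamma s)).div (GammaSeq_tendsto_Gamma s) hΓ using 1
  · funext n
    rw [Pi.div_apply, GammaSeq, div_div_eq_mul_div, ← poch_eq_prod_range,
      show (n : ℝ) + 1 + s = s + (n + 1 : ℕ) by push_cast; ring, Gamma_add_nat_eq_mul_poch hs]
    ring
  · rw [div_self hΓ]

lemma tendsto_Gamma_nat_add_one_add_div (s : ℝ) :
    Tendsto (fun n : ℕ => Gamma (n + 1 + s) / (n ! * (n : ℝ) ^ s)) atTop (𝓝 1) := by
  obtain ⟨N, hN⟩ := exists_nat_gt (-s)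
  induction N generalizing s with
  | zero => exact tendsto_Gamma_nat_add_one_add_div_of_pos (by simpa using hN)
  | succ N ih =>
    rcases lt_or_ge 0 s with hs | hs
    · exact tendsto_Gamma_nat_add_one_add_div_of_pos hs
    have hstep := (ih (s + 1) (by push_cast at hN; linarith)).mul
      (tendsto_natCast_div_add_atTop (1 + s))
    rw [mul_one] at hstep
    refine hstep.congr' ?_
    filter_upwards [eventually_gt_atTop ⌈1 - s⌉₊] with n hn
    have hn : 1 - s < n := Nat.lt_of_ceil_lt hn
    have hn0 : (n : ℝ) ≠ 0 := by linarith
    have hns : (n : ℝ) + 1 + s ≠ 0 := by linarith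
    rw [show (n : ℝ) + 1 + (s + 1) = (n + 1 + s) + 1 by ring, Gamma_add_one hns,
      Real.rpow_add_one hn0, ← add_assoc]
    field_simp

lemma tendsto_poch_div_factorial_mul_rpow {a : ℝ} (ha : -1 < a) :
    Tendsto (fun n : ℕ => poch (a + 1) n / (n ! * (n : ℝ) ^ a)) atTop
      (𝓝 (Gamma (a + 1))⁻¹) := by
  have hΓ : 0 < Gamma (a + 1) := Gamma_pos_of_pos (by linarith)
  convert (tendsto_Gamma_nat_add_one_add_div a).div_const (Gamma (a + 1)) using 1
  · funext n
    rw [show (n : ℝ) + 1 + a = a + 1 + n by ring,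
      Gamma_add_nat_eq_mul_poch (by linarith)]
    field_simp
  · rw [one_div]

lemma tendsto_Gamma_mul_Gamma_div_Gamma_mul_Gamma (s t : ℝ) :
    Tendsto (fun n : ℕ => Gamma (n + 1) * Gamma (n + 1 + (s + t)) /
      (Gamma (n + 1 + s) * Gamma (n + 1 + t))) atTop (𝓝 1) := by
  have h := (tendsto_Gamma_nat_add_one_add_div (s + t)).div
    ((tendsto_Gamma_nat_add_one_add_div s).mul (tendsto_Gamma_nat_add_one_add_div t))
    (by norm_num)
  rw [mul_one, div_one] at h
  refine h.congr' ?_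
  filter_upwards [eventually_gt_atTop 0] with n hn
  have hn0 : (0 : ℝ) < n := by exact_mod_cast hn
  rw [Pi.div_apply, Real.rpow_add hn0, Gamma_nat_eq_factorial]
  have : (n ! : ℝ) ≠ 0 := by positivity
  have : (n : ℝ) ^ s ≠ 0 := by positivity
  have : (n : ℝ) ^ t ≠ 0 := by positivity
  field_simp

lemma eventually_sqrt_div_two_le_atilde2n1 (l m : ℝ) :
    ∀ᶠ n : ℕ in atTop, √(n : ℝ) / 2 ≤ atilde2n1 l m n := by
  have hB := (tendsto_Gamma_mul_Gamma_div_Gamma_mul_Gamma (l - 1 / 2) (m + 1 / 2)).eventually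
    (eventually_ge_nhds (show (1 / 2 : ℝ) < 1 by norm_num))
  filter_upwards [hB, eventually_gt_atTop ⌈-(l + m + 1)⌉₊] with n hB hn
  have hlm : -(l + m + 1) < n := Nat.lt_of_ceil_lt hn
  rw [show (n : ℝ) + 1 + (l - 1 / 2 + (m + 1 / 2)) = n + l + m + 1 by ring,
    show (n : ℝ) + 1 + (l - 1 / 2) = n + l + 1 / 2 by ring,
    show (n : ℝ) + 1 + (m + 1 / 2) = n + m + 3 / 2 by ring] at hB
  have hX : (n : ℝ) / 4 ≤ (2 * n + l + m + 1) * Gamma (n + 1) * Gamma (n + l + m + 1) /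
      (Gamma (n + l + 1 / 2) * Gamma (n + m + 3 / 2)) := by
    rw [mul_assoc, mul_div_assoc]
    nlinarith
  calc √(n : ℝ) / 2 = √((n : ℝ) / 4) := by
        rw [Real.sqrt_div' _ (by norm_num), show (4 : ℝ) = 2 ^ 2 by norm_num,
          Real.sqrt_sq (by norm_num)]
    _ ≤ atilde2n1 l m n := by
        rw [atilde2n1, ← Real.sqrt_eq_rpow]
        exact Real.sqrt_le_sqrt hX

lemma jacobiP_eq_sum_poch (a b : ℝ) (n : ℕ) (x : ℝ) :
    jacobiP a b n x = (n ! : ℝ)⁻¹ * ∑ k ∈ range (n + 1),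
      (n.choose k : ℝ) * poch (n + a + b + 1) k * poch (a + k + 1) (n - k) * ((x - 1) / 2) ^ k :=
  rfl

lemma jacobiP_neg_coeff_eq (a b : ℝ) {n j : ℕ} (hj : j ≤ n) :
    ∑ i ∈ range (n - j + 1), (n.choose (j + i) : ℝ) * poch (n + a + b + 1) (j + i) *
        poch (a + (j + i : ℕ) + 1) (n - (j + i)) * (-1) ^ (j + i) * ((j + i).choose j : ℝ) =
      (-1) ^ n * ((n.choose j : ℝ) * poch (n + a + b + 1) j * poch (b + j + 1) (n - j)) := by
  set c : ℝ := n + a + b + 1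
  have hterm : ∀ i ∈ range (n - j + 1),
      (n.choose (j + i) : ℝ) * poch c (j + i) * poch (a + (j + i : ℕ) + 1) (n - (j + i)) *
          (-1) ^ (j + i) * ((j + i).choose j : ℝ) =
        ((n.choose j : ℝ) * poch c j * (-1) ^ j) * ((-1) ^ i * ((n - j).choose i : ℝ) *
          poch (c + j) i * poch (a + j + 1 + i) (n - j - i)) := fun i hi => by
    have hchoose : (n.choose (j + i) : ℝ) * ((j + i).choose j : ℝ) =
        (n.choose j : ℝ) * ((n - j).choose i : ℝ) := by
      exact_mod_cast (Nat.choose_mul (Nat.le_add_right j i)).trans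
        (by rw [Nat.add_sub_cancel_left])
    rw [← poch_mul_poch_add, Nat.sub_add_eq, pow_add, Nat.cast_add,
      show a + (j + i : ℝ) + 1 = a + j + 1 + i by ring]
    linear_combination (poch c j * poch (c + j) i * poch (a + j + 1 + i) (n - j - i) *
      (-1) ^ j * (-1) ^ i) * hchoose
  rw [sum_congr rfl hterm, ← mul_sum, sum_neg_one_pow_mul_choose_mul_poch,
    show a + j + 1 - (c + j) = -(b + n) by ring, poch_neg, Nat.cast_sub hj,
    show b + n - (n - j) + 1 = b + j + 1 by ring]
  rw [show (-1 : ℝ) ^ n = (-1) ^ j * (-1) ^ (n - j) by rw [← pow_add, Nat.add_sub_cancel' hj]]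
  ring

lemma jacobiP_neg (a b : ℝ) (n : ℕ) (x : ℝ) :
    jacobiP a b n (-x) = (-1) ^ n * jacobiP b a n x := by
  set y := (x - 1) / 2
  set g : ℕ → ℕ → ℝ := fun k j => (n.choose k : ℝ) * poch (n + a + b + 1) k *
    poch (a + k + 1) (n - k) * (-1) ^ k * (k.choose j : ℝ) * y ^ j
  have hexpand : ∀ k, ((-x - 1) / 2) ^ k =
      (-1) ^ k * ∑ j ∈ range (k + 1), y ^ j * (k.choose j : ℝ) := fun k => by
    rw [show (-x - 1) / 2 = -(y + 1) by ring, neg_pow, add_pow]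
    simp only [one_pow, mul_one]
  have hS : ∑ k ∈ range (n + 1), (n.choose k : ℝ) * poch (n + a + b + 1) k *
      poch (a + k + 1) (n - k) * ((-x - 1) / 2) ^ k =
      (-1) ^ n * ∑ j ∈ range (n + 1), (n.choose j : ℝ) * poch (n + a + b + 1) j *
        poch (b + j + 1) (n - j) * y ^ j := by
    calc _ = ∑ k ∈ range (n + 1), ∑ j ∈ range (k + 1), g (j + (k - j)) j := by
          refine sum_congr rfl fun k _ => ?_
          rw [hexpand, mul_sum, mul_sum]
          refine sum_congr rfl fun j hj => ?_
          rw [Nat.add_sub_cancel' (Nat.lt_succ_iff.1 (mem_range.1 hj))]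
          ring
      _ = ∑ j ∈ range (n + 1), ∑ i ∈ range (n + 1 - j), g (j + i) j :=
          sum_range_diag_flip (n + 1) fun j i => g (j + i) j
      _ = _ := by
          rw [mul_sum]
          refine sum_congr rfl fun j hj => ?_
          have hj : j ≤ n := Nat.lt_succ_iff.1 (mem_range.1 hj)
          rw [Nat.sub_add_comm hj, ← sum_mul, jacobiP_neg_coeff_eq a b hj]
          ring
  rw [jacobiP_eq_sum_poch, jacobiP_eq_sum_poch,
    show (n : ℝ) + b + a + 1 = n + a + b + 1 by ring, hS]
  ring

lemma abs_jacobiP_term_le {a b y : ℝ} {n k : ℕ} (ha : 0 ≤ a) (hc : 0 ≤ n + a + b + 1)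
    (hab : a + b + 1 ≤ n) (hy : |y| ≤ 1 / (4 * n ^ 2)) (hn : 0 < n) (hk : k ≤ n) :
    |(n.choose k : ℝ) * poch (n + a + b + 1) k * poch (a + k + 1) (n - k) * y ^ k| ≤
      (3 / 4) ^ k / (k ! : ℝ) ^ 2 * poch (a + 1) n := by
  have hn0 : (0 : ℝ) < n := by exact_mod_cast hn
  have hfac : (0 : ℝ) < k ! := by positivity
  have hkey : (n.choose k : ℝ) * poch (n + a + b + 1) k * |y| ^ k ≤ (3 / 4) ^ k / k ! :=
    calc (n.choose k : ℝ) * poch (n + a + b + 1) k * |y| ^ k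
        ≤ (n ^ k / k !) * (3 * n) ^ k * (1 / (4 * n ^ 2)) ^ k := by
          gcongr
          · exact poch_nonneg hc k
          · exact Nat.choose_le_pow_div k n
          · exact (poch_le_pow hc hk).trans (pow_le_pow_left₀ (by linarith) (by linarith) k)
      _ = (3 / 4) ^ k / k ! := by
          rw [div_mul_eq_mul_div, div_mul_eq_mul_div, ← mul_pow, ← mul_pow]
          congr 2
          field_simp
  have hsplit := poch_mul_poch_add (a + 1) k (n - k)
  rw [Nat.add_sub_cancel' hk, show a + 1 + (k : ℝ) = a + k + 1 by ring] at hsplit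
  rw [abs_mul, abs_mul, abs_of_nonneg (by have := poch_nonneg hc k; positivity), abs_pow,
    abs_of_nonneg (poch_nonneg (by positivity) _), ← hsplit]
  calc (n.choose k : ℝ) * poch (n + a + b + 1) k * poch (a + k + 1) (n - k) * |y| ^ k
      = (n.choose k * poch (n + a + b + 1) k * |y| ^ k) * poch (a + k + 1) (n - k) := by ring
    _ ≤ ((3 / 4) ^ k / k ! / k ! * poch (a + 1) k) * poch (a + k + 1) (n - k) := by
        refine mul_le_mul_of_nonneg_right ?_ (poch_nonneg (by positivity) _)
        calc _ ≤ (3 / 4 : ℝ) ^ k / k ! := hkey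
          _ = (3 / 4) ^ k / k ! / k ! * k ! := by field_simp
          _ ≤ _ := by gcongr; exact factorial_le_poch ha k
    _ = _ := by ring

lemma sum_range_pow_div_factorial_sq_le (n : ℕ) :
    ∑ k ∈ range n, (3 / 4 : ℝ) ^ (k + 1) / ((k + 1) ! : ℝ) ^ 2 ≤ 12 / 13 := by
  have hterm (k : ℕ) : (3 / 4 : ℝ) ^ (k + 1) / ((k + 1) ! : ℝ) ^ 2 ≤ 3 / 4 * (3 / 16) ^ k := by
    have h2 : (2 : ℝ) ^ k ≤ (k + 1) ! := by
      exact_mod_cast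
        (by simpa [add_comm] using Nat.factorial_mul_pow_le_factorial (m := 1) (n := k))
    rw [div_le_iff₀ (by positivity)]
    calc (3 / 4 : ℝ) ^ (k + 1) = 3 / 4 * (3 / 16) ^ k * (2 ^ k) ^ 2 := by
          rw [← pow_mul, mul_comm k 2, pow_mul, mul_assoc, ← mul_pow, pow_succ]; norm_num; ring
      _ ≤ 3 / 4 * (3 / 16) ^ k * ((k + 1) ! : ℝ) ^ 2 := by gcongr
  calc _ ≤ ∑ k ∈ range n, 3 / 4 * (3 / 16 : ℝ) ^ k := sum_le_sum fun k _ => hterm k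
    _ ≤ 3 / 4 * ((3 / 16) ^ 0 / (1 - 3 / 16)) := by
        rw [← mul_sum, range_eq_Ico]
        gcongr
        exact geom_sum_Ico_le_of_lt_one (by norm_num) (by norm_num)
    _ = 12 / 13 := by norm_num

lemma poch_div_le_jacobiP {a b x : ℝ} {n : ℕ} (ha : 0 ≤ a) (hc : 0 ≤ n + a + b + 1)
    (hab : a + b + 1 ≤ n) (hx : |x - 1| ≤ 1 / (2 * n ^ 2)) :
    poch (a + 1) n / (13 * n !) ≤ jacobiP a b n x := by
  set T : ℕ → ℝ := fun k => (n.choose k : ℝ) * poch (n + a + b + 1) k *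
    poch (a + k + 1) (n - k) * ((x - 1) / 2) ^ k
  have hy : |(x - 1) / 2| ≤ 1 / (4 * n ^ 2) := by
    rw [abs_div, abs_two]
    calc |x - 1| / 2 ≤ 1 / (2 * n ^ 2) / 2 := by gcongr
      _ = 1 / (4 * n ^ 2) := by ring
  have htail : |∑ k ∈ range n, T (k + 1)| ≤ 12 / 13 * poch (a + 1) n :=
    calc |∑ k ∈ range n, T (k + 1)| ≤ ∑ k ∈ range n, |T (k + 1)| := abs_sum_le_sum_abs _ _
      _ ≤ ∑ k ∈ range n, (3 / 4) ^ (k + 1) / ((k + 1) ! : ℝ) ^ 2 * poch (a + 1) n :=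
          sum_le_sum fun k hk => abs_jacobiP_term_le ha hc hab hy
            (Nat.zero_lt_of_lt (mem_range.1 hk)) (mem_range.1 hk)
      _ ≤ 12 / 13 * poch (a + 1) n := by
          rw [← sum_mul]
          exact mul_le_mul_of_nonneg_right (sum_range_pow_div_factorial_sq_le n)
            (poch_nonneg (by linarith) n)
  have hT0 : T 0 = poch (a + 1) n := by simp [T, poch]
  rw [jacobiP_eq_sum_poch, ← show ∑ k ∈ range (n + 1), T k = _ from rfl, sum_range_succ', hT0,
    div_eq_inv_mul, mul_inv, mul_comm (13 : ℝ)⁻¹, mul_assoc]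
  gcongr
  linarith [neg_abs_le (∑ k ∈ range n, T (k + 1))]

lemma exists_pos_eventually_rpow_le_jacobiP_cos {a : ℝ} (b : ℝ) (ha : 0 ≤ a) :
    ∃ C > 0, ∀ᶠ n : ℕ in atTop, C * (n : ℝ) ^ a ≤ jacobiP a b n (cos (1 / n)) := by
  have hΓ : 0 < Gamma (a + 1) := Gamma_pos_of_pos (by linarith)
  refine ⟨(26 * Gamma (a + 1))⁻¹, by positivity, ?_⟩
  have hpoch := (tendsto_poch_div_factorial_mul_rpow (by linarith : -1 < a)).eventually
    (eventually_ge_nhds (show (2 * Gamma (a + 1))⁻¹ < (Gamma (a + 1))⁻¹ by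
      gcongr; linarith))
  filter_upwards [hpoch, eventually_ge_atTop ⌈a + b + 1⌉₊, eventually_ge_atTop ⌈-(a + b + 1)⌉₊,
    eventually_gt_atTop 0] with n hpoch hab hc hn
  have hn0 : (0 : ℝ) < n := by exact_mod_cast hn
  have hx : |cos (1 / n) - 1| ≤ 1 / (2 * n ^ 2) := by
    rw [abs_sub_comm, abs_of_nonneg (by linarith [cos_le_one (1 / (n : ℝ))])]
    have := Real.one_sub_sq_div_two_le_cos (x := 1 / (n : ℝ))
    rw [div_pow, one_pow] at this
    calc 1 - cos (1 / n) ≤ 1 / n ^ 2 / 2 := by linarith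
      _ = 1 / (2 * n ^ 2) := by ring
  refine le_trans ?_
    (poch_div_le_jacobiP ha (by linarith [Nat.ceil_le.1 hc]) (Nat.ceil_le.1 hab) hx)
  calc (26 * Gamma (a + 1))⁻¹ * n ^ a = (2 * Gamma (a + 1))⁻¹ * n ^ a / 13 := by ring
    _ ≤ poch (a + 1) n / (n ! * n ^ a) * n ^ a / 13 := by gcongr
    _ = poch (a + 1) n / (13 * n !) := by field_simp

@[fun_prop]
lemma continuous_jacobiP (a b : ℝ) (n : ℕ) : Continuous (jacobiP a b n) := by
  unfold jacobiP; fun_prop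

lemma mul_sin_mul_abs_jacobiP_cos_le_sSup (A a b θ : ℝ) (n : ℕ) :
    A * sin θ * |jacobiP a b n (cos (2 * θ))| ≤
      sSup ((fun t : ℝ => |A * t * jacobiP b a n (2 * t ^ 2 - 1)|) '' Icc (-1) 1) := by
  have hbdd : BddAbove ((fun t : ℝ => |A * t * jacobiP b a n (2 * t ^ 2 - 1)|) '' Icc (-1) 1) :=
    (isCompact_Icc.image (by fun_prop)).bddAbove
  refine le_trans ?_ (le_csSup hbdd ⟨sin θ, ⟨Real.neg_one_le_sin θ, sin_le_one θ⟩, rfl⟩)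
  change _ ≤ |A * sin θ * jacobiP b a n (2 * sin θ ^ 2 - 1)|
  rw [show 2 * sin θ ^ 2 - 1 = -cos (2 * θ) by rw [cos_two_mul_eq_one_sub]; ring,
    jacobiP_neg, abs_mul, abs_mul (_ ^ n), abs_pow, abs_neg, abs_one, one_pow, one_mul]
  exact mul_le_mul_of_nonneg_right (le_abs_self _) (abs_nonneg _)

lemma one_div_pi_mul_le_sin_one_div_two_mul {n : ℕ} (hn : 0 < n) :
    1 / (π * n) ≤ sin (1 / (2 * n)) := by
  have hn1 : (1 : ℝ) ≤ n := by exact_mod_cast hn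
  calc 1 / (π * n) = 2 / π * (1 / (2 * n)) := by field_simp
    _ ≤ sin (1 / (2 * n)) := Real.mul_le_sin (by positivity) <| by
        rw [div_le_iff₀ (by positivity)]; nlinarith [Real.pi_gt_three]

theorem odd_gegenbauer_lower_bound_n_mu_general (l m : ℝ) (hm : 0 < m) :
    ∃ c : ℝ, 0 < c ∧ ∃ n₀ : ℕ, ∀ n : ℕ, n₀ ≤ n →
      atilde2n1 l m n * Real.sin (1 / (2 * n)) *
          |jacobiP (m + 1 / 2) (l - 1 / 2) n (Real.cos (1 / n))| ≤
        sSup ((fun t : ℝ =>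
            |atilde2n1 l m n * t * jacobiP (l - 1 / 2) (m + 1 / 2) n (2 * t ^ 2 - 1)|) ''
          Set.Icc (-1) 1) ∧
      c * (n : ℝ) ^ m ≤
        atilde2n1 l m n * Real.sin (1 / (2 * n)) *
          |jacobiP (m + 1 / 2) (l - 1 / 2) n (Real.cos (1 / n))| := by
  obtain ⟨C, hC, hJ⟩ :=
    exists_pos_eventually_rpow_le_jacobiP_cos (l - 1 / 2) (a := m + 1 / 2) (by linarith)
  obtain ⟨n₀, hn₀⟩ := eventually_atTop.1
    (hJ.and ((eventually_sqrt_div_two_le_atilde2n1 l m).and (eventually_gt_atTop 0)))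
  refine ⟨C / (2 * π), by positivity, n₀, fun n hn => ?_⟩
  obtain ⟨hJ, hA, hn⟩ := hn₀ n hn
  have hn0 : (0 : ℝ) < n := by exact_mod_cast hn
  constructor
  · rw [show 1 / (n : ℝ) = 2 * (1 / (2 * n)) by field_simp]
    exact mul_sin_mul_abs_jacobiP_cos_le_sSup _ _ _ _ n
  have hsin := one_div_pi_mul_le_sin_one_div_two_mul hn
  have hA0 : 0 ≤ atilde2n1 l m n := (by positivity : (0 : ℝ) ≤ √(n : ℝ) / 2).trans hA
  have hpow : √(n : ℝ) * n ^ (m + 1 / 2) = n * n ^ m := by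
    rw [Real.sqrt_eq_rpow, ← Real.rpow_add hn0, show 1 / 2 + (m + 1 / 2) = m + 1 by ring,
      Real.rpow_add_one hn0.ne']
    ring
  calc C / (2 * π) * n ^ m = C * (√(n : ℝ) * n ^ (m + 1 / 2)) / (2 * π * n) := by
        rw [hpow]; field_simp
    _ = √(n : ℝ) / 2 * (1 / (π * n)) * (C * n ^ (m + 1 / 2)) := by ring
    _ ≤ _ := mul_le_mul (mul_le_mul hA hsin (by positivity) hA0) (hJ.trans (le_abs_self _))
        (by positivity) (mul_nonneg hA0 ((one_div_nonneg.2 (by positivity)).trans hsin))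

theorem odd_gegenbauer_lower_bound_n_mu (l m : ℝ) (hl : -(1 / 2 : ℝ) < l) (hm : 0 < m) :
    ∃ c : ℝ, 0 < c ∧ ∃ n₀ : ℕ, ∀ n : ℕ, n₀ ≤ n →
      atilde2n1 l m n * Real.sin (1 / (2 * n)) *
          |jacobiP (m + 1 / 2) (l - 1 / 2) n (Real.cos (1 / n))| ≤
        sSup ((fun t : ℝ =>
            |atilde2n1 l m n * t * jacobiP (l - 1 / 2) (m + 1 / 2) n (2 * t ^ 2 - 1)|) ''
          Set.Icc (-1) 1) ∧
      c * (n : ℝ) ^ m ≤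
        atilde2n1 l m n * Real.sin (1 / (2 * n)) *
          |jacobiP (m + 1 / 2) (l - 1 / 2) n (Real.cos (1 / n))| :=
  odd_gegenbauer_lower_bound_n_mu_general l m hm
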